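/- arXiv:2507.09511 — 4 statements merged into one kernel-verified Lean document; each statement's English description precedes it below -/
import Mathlib

section
/- The largest adjacency eigenvalue of the spider graph T(ℓ,ℓ,ℓ) tends to 3/√2 as ℓ → ∞. -/
open scoped Classical

/-- The real adjacency matrix of a finite simple graph. -/
noncomputable def adjMat {V : Type*} [Fintype V] [DecidableEq V] (G : SimpleGraph V) :
    Matrix V V ℝ :=
  Matrix.of fun u v => if G.Adj u v then (1 : ℝ) else 0

/-- The eigenvalues (roots of the characteristic polynomial, with multiplicity) of a real
matrix, listed in nondecreasing order. -/
noncomputable def eigList {V : Type*} [Fintype V] [DecidableEq V] (A : Matrix V V ℝ) : List ℝ :=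
  A.charpoly.roots.sort (· ≤ ·)

/-- The `k`-th largest eigenvalue (with multiplicity) of `A`, 1-indexed:
`eig A 1 ≥ eig A 2 ≥ …`. -/
noncomputable def eig {V : Type*} [Fintype V] [DecidableEq V] (A : Matrix V V ℝ) (k : ℕ) : ℝ :=
  (eigList A).getD ((eigList A).length - k) 0

/-- The `k`-th largest adjacency eigenvalue of a finite simple graph (`λₖ(G)`). -/
noncomputable def graphEig {V : Type*} [Fintype V] [DecidableEq V] (G : SimpleGraph V)
    (k : ℕ) : ℝ :=
  eig (adjMat G) k

/-- The multiplicity of `μ` as an eigenvalue of `A` (dimension of the eigenspace). -/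
noncomputable def eigMult {V : Type*} [Fintype V] [DecidableEq V] (A : Matrix V V ℝ)
    (μ : ℝ) : ℕ :=
  Module.finrank ℝ (LinearMap.ker (A.mulVecLin - μ • LinearMap.id))

/-- The number of edges of a finite simple graph. -/
noncomputable def edgeCount {V : Type*} [Fintype V] (G : SimpleGraph V) : ℕ :=
  G.edgeSet.toFinite.toFinset.card

/-- The cyclomatic number `|E| - |V| + 1` of a (connected) finite graph. -/
noncomputable def cyclomatic {V : Type*} [Fintype V] (G : SimpleGraph V) : ℕ :=
  edgeCount G + 1 - Fintype.card V

/-- The maximum degree of a finite simple graph. -/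
noncomputable def maxDeg {V : Type*} [Fintype V] (G : SimpleGraph V) : ℕ :=
  Finset.univ.sup fun v => (G.neighborSet v).toFinite.toFinset.card

/-- The spider `T(ℓ,ℓ,ℓ)`: three paths of length `ℓ` (in edges) sharing exactly their
initial vertex `none`. -/
def spider (ℓ : ℕ) : SimpleGraph (Option (Fin 3 × Fin ℓ)) :=
  SimpleGraph.fromRel fun u v =>
    match u, v with
    | none, some (_, j) => (j : ℕ) = 0
    | some (i, j), some (i', j') => i = i' ∧ (j' : ℕ) = (j : ℕ) + 1
    | _, _ => False

/-!
Put `t = 1/√2` and let `x` be the vector `t ^ depth` on `T(ℓ,ℓ,ℓ)`. Since `1 + t² = 3t²`, every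
non-leaf vertex satisfies `(A x)ᵥ = 3t xᵥ`, and the leaves fall short by `t^(ℓ+1)`. As `x > 0` and
`A` is symmetric and nonnegative, `A x ≤ 3t x` forces `λ₁ ≤ 3t` (Schur test), while the Rayleigh
quotient of `x` is `3t - 3t^(2ℓ+1) / ‖x‖² ≥ 3t - 3t^(2ℓ+1)`.
-/

open Matrix Module.End Filter Topology

section Rayleigh

variable {𝕜 E : Type*} [RCLike 𝕜] [NormedAddCommGroup E] [InnerProductSpace 𝕜 E]
  [FiniteDimensional 𝕜 E] {T : E →ₗ[𝕜] E}

theorem LinearMap.IsSymmetric.exists_hasEigenvalue_ge_rayleigh (hT : T.IsSymmetric) {x : E}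
    (hx : x ≠ 0) : ∃ μ : ℝ, HasEigenvalue T μ ∧ RCLike.re (inner 𝕜 (T x) x) / ‖x‖ ^ 2 ≤ μ := by
  have : Nontrivial E := ⟨⟨x, 0, hx⟩⟩
  refine ⟨_, hT.hasEigenvalue_iSup_of_finiteDimensional, le_ciSup (f := fun x : {x : E // x ≠ 0} ↦
    RCLike.re (inner 𝕜 (T x) x) / ‖(x : E)‖ ^ 2) ?_ ⟨x, hx⟩⟩
  refine ⟨‖LinearMap.toContinuousLinearMap T‖, ?_⟩
  rintro _ ⟨y, rfl⟩
  exact (le_abs_self _).trans ((LinearMap.toContinuousLinearMap T).rayleighQuotient_le_norm y)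

end Rayleigh

namespace Matrix

variable {n : Type*} [Fintype n]

theorem dotProduct_mulVec_le_of_mulVec_le {R : Type*} [Field R] [LinearOrder R]
    [IsStrictOrderedRing R] {A : Matrix n n R} (hA : A.IsSymm) (hA₀ : ∀ i j, 0 ≤ A i j)
    {x : n → R} (hx : ∀ i, 0 < x i) {μ : R} (hAx : A *ᵥ x ≤ μ • x) (y : n → R) :
    y ⬝ᵥ (A *ᵥ y) ≤ μ * (y ⬝ᵥ y) := by
  set w : n → R := fun i ↦ y i ^ 2 / x i
  have amgm : ∀ i j, y i * (A i j * y j) ≤ (A i j * x j * w i + A i j * x i * w j) / 2 := by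
    intro i j
    have hxi := hx i
    have hxj := hx j
    have : 0 ≤ A i j * (x j * y i - x i * y j) ^ 2 / (x i * x j) := by
      have := hA₀ i j; positivity
    have e : (A i j * x j * w i + A i j * x i * w j) / 2 - y i * (A i j * y j) =
        A i j * (x j * y i - x i * y j) ^ 2 / (x i * x j) / 2 := by
      simp only [w]; field_simp; ring
    linarith
  have hsymm : x ⬝ᵥ (A *ᵥ w) = w ⬝ᵥ (A *ᵥ x) := by
    rw [dotProduct_mulVec, dotProduct_comm, ← vecMul_transpose, hA.eq]
  calc y ⬝ᵥ (A *ᵥ y) = ∑ i, ∑ j, y i * (A i j * y j) := by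
        simp only [dotProduct, mulVec, Finset.mul_sum]
    _ ≤ ∑ i, ∑ j, (A i j * x j * w i + A i j * x i * w j) / 2 :=
        Finset.sum_le_sum fun i _ ↦ Finset.sum_le_sum fun j _ ↦ amgm i j
    _ = (w ⬝ᵥ (A *ᵥ x) + x ⬝ᵥ (A *ᵥ w)) / 2 := by
        simp only [dotProduct, mulVec, Finset.mul_sum, ← Finset.sum_div, Finset.sum_add_distrib]
        congr 2 <;> exact Finset.sum_congr rfl fun i _ ↦ Finset.sum_congr rfl fun j _ ↦ by ring
    _ = w ⬝ᵥ (A *ᵥ x) := by rw [hsymm]; ring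
    _ ≤ w ⬝ᵥ (μ • x) := dotProduct_le_dotProduct_of_nonneg_left hAx fun i ↦ by
        have := hx i; positivity
    _ = μ * (y ⬝ᵥ y) := by
        simp only [dotProduct, w, Pi.smul_apply, smul_eq_mul, Finset.mul_sum]
        exact Finset.sum_congr rfl fun i _ ↦ by have := (hx i).ne'; field_simp

variable [DecidableEq n]

theorem isRoot_charpoly_iff_hasEigenvalue {𝕜 : Type*} [RCLike 𝕜] {A : Matrix n n 𝕜} {μ : 𝕜} :
    A.charpoly.IsRoot μ ↔ HasEigenvalue (toEuclideanLin A) μ := by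
  rw [hasEigenvalue_iff_mem_spectrum, spectrum_toLpLin, mem_spectrum_iff_isRoot_charpoly]

theorem exists_mulVec_eq_smul_of_isRoot_charpoly {𝕜 : Type*} [RCLike 𝕜] {A : Matrix n n 𝕜}
    {μ : 𝕜} (h : A.charpoly.IsRoot μ) : ∃ v ≠ 0, A *ᵥ v = μ • v := by
  obtain ⟨v, hv⟩ := (isRoot_charpoly_iff_hasEigenvalue.mp h).exists_hasEigenvector
  exact ⟨v.ofLp, by simpa using hv.2, congrArg WithLp.ofLp hv.apply_eq_smul⟩

theorem IsHermitian.exists_isRoot_charpoly_ge {A : Matrix n n ℝ} (hA : A.IsHermitian)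
    {y : n → ℝ} (hy : y ≠ 0) : ∃ μ, A.charpoly.IsRoot μ ∧ y ⬝ᵥ (A *ᵥ y) / (y ⬝ᵥ y) ≤ μ := by
  obtain ⟨μ, hμ, hle⟩ := (isSymmetric_toEuclideanLin_iff.mpr hA).exists_hasEigenvalue_ge_rayleigh
    (x := WithLp.toLp 2 y) (by simpa using hy)
  refine ⟨μ, isRoot_charpoly_iff_hasEigenvalue.mpr hμ, ?_⟩
  rwa [← real_inner_self_eq_norm_sq, EuclideanSpace.inner_eq_star_dotProduct,
    EuclideanSpace.inner_eq_star_dotProduct] at hle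

end Matrix

section LargestEigenvalue

variable {n : Type*} [Fintype n] [DecidableEq n] {A : Matrix n n ℝ}

theorem eig_one_eq_getLast (h : eigList A ≠ []) : eig A 1 = (eigList A).getLast h := by
  rw [eig, List.getLast_eq_getElem, List.getD_eq_getElem]

theorem isGreatest_eig_one (h : ∃ r, r ∈ A.charpoly.roots) :
    IsGreatest {r | r ∈ A.charpoly.roots} (eig A 1) := by
  have hne : eigList A ≠ [] := by
    rwa [← List.length_pos_iff, eigList, Multiset.length_sort, Multiset.card_pos_iff_exists_mem]
  rw [eig_one_eq_getLast hne]
  refine ⟨(Multiset.mem_sort _).mp (List.getLast_mem hne), fun r hr ↦ ?_⟩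
  exact (Multiset.pairwise_sort _ _).rel_getLast ((Multiset.mem_sort _).mpr hr)

theorem rayleigh_le_eig_one (hA : A.IsHermitian) {y : n → ℝ} (hy : y ≠ 0) :
    y ⬝ᵥ (A *ᵥ y) / (y ⬝ᵥ y) ≤ eig A 1 := by
  obtain ⟨μ, hμ, hle⟩ := hA.exists_isRoot_charpoly_ge hy
  have hmem : μ ∈ A.charpoly.roots := (Polynomial.mem_roots A.charpoly_monic.ne_zero).mpr hμ
  exact hle.trans ((isGreatest_eig_one ⟨μ, hmem⟩).2 hmem)

theorem eig_one_le_of_mulVec_le [Nonempty n] (hA : A.IsSymm) (hA₀ : ∀ i j, 0 ≤ A i j)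
    {x : n → ℝ} (hx : ∀ i, 0 < x i) {μ : ℝ} (hAx : A *ᵥ x ≤ μ • x) : eig A 1 ≤ μ := by
  have hx₀ : x ≠ 0 := fun h ↦ (hx (Classical.arbitrary n)).ne' (congrFun h _)
  obtain ⟨ν, hν, -⟩ := (isHermitian_iff_isSymm.mpr hA).exists_isRoot_charpoly_ge hx₀
  have hroots : ∃ r, r ∈ A.charpoly.roots :=
    ⟨ν, (Polynomial.mem_roots A.charpoly_monic.ne_zero).mpr hν⟩
  obtain ⟨w, hw, hAw⟩ := exists_mulVec_eq_smul_of_isRoot_charpoly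
    (Polynomial.isRoot_of_mem_roots (isGreatest_eig_one hroots).1)
  have hww : 0 < w ⬝ᵥ w :=
    lt_of_le_of_ne (Finset.sum_nonneg fun i _ ↦ mul_self_nonneg (w i))
      (Ne.symm (dotProduct_self_eq_zero.not.mpr hw))
  have := dotProduct_mulVec_le_of_mulVec_le hA hA₀ hx hAx w
  rw [hAw, dotProduct_smul, smul_eq_mul] at this
  exact le_of_mul_le_mul_right this hww

end LargestEigenvalue

section AdjacencyMatrix

variable {V : Type*} [Fintype V] [DecidableEq V] (G : SimpleGraph V)

theorem adjMat_mulVec_apply (x : V → ℝ) (u : V) :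
    (adjMat G *ᵥ x) u = ∑ v, if G.Adj u v then x v else 0 := by
  simp [adjMat, mulVec, dotProduct]

theorem adjMat_nonneg (u v : V) : 0 ≤ adjMat G u v := by
  simp only [adjMat, of_apply]
  split_ifs <;> norm_num

theorem isSymm_adjMat : (adjMat G).IsSymm := G.isSymm_adjMatrix (α := ℝ)

end AdjacencyMatrix

theorem Fin.sum_ite_val_eq {M : Type*} [AddCommMonoid M] (ℓ m : ℕ) (g : ℕ → M) :
    ∑ j : Fin ℓ, (if (j : ℕ) = m then g j else 0) = if m < ℓ then g m else 0 := by
  rw [Fin.sum_univ_eq_sum_range (fun k ↦ if k = m then g k else 0), Finset.sum_ite_eq']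
  simp only [Finset.mem_range]

namespace Spider

variable {ℓ : ℕ}

theorem adj_none_some (i : Fin 3) (j : Fin ℓ) :
    (spider ℓ).Adj none (some (i, j)) ↔ (j : ℕ) = 0 := by
  simp [spider]

theorem adj_some_some (i i' : Fin 3) (j j' : Fin ℓ) :
    (spider ℓ).Adj (some (i, j)) (some (i', j')) ↔
      i = i' ∧ ((j' : ℕ) = j + 1 ∨ (j : ℕ) = j' + 1) := by
  simp only [spider, SimpleGraph.fromRel_adj, ne_eq, Option.some.injEq, Prod.mk.injEq]
  constructor
  · rintro ⟨-, h | h⟩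
    exacts [⟨h.1, .inl h.2⟩, ⟨h.1.symm, .inr h.2⟩]
  · rintro ⟨rfl, h | h⟩ <;> refine ⟨fun h' ↦ ?_, by tauto⟩ <;> rw [h'.2] at h <;> omega

noncomputable def ratio : ℝ := (√2)⁻¹

theorem ratio_pos : 0 < ratio := by unfold ratio; positivity

theorem ratio_lt_one : ratio < 1 := inv_lt_one_of_one_lt₀ (by simp [Real.lt_sqrt])

theorem two_mul_ratio_sq : 2 * ratio ^ 2 = 1 := by simp [ratio]

noncomputable def testVec (ℓ : ℕ) : Option (Fin 3 × Fin ℓ) → ℝ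
  | none => 1
  | some (_, j) => ratio ^ ((j : ℕ) + 1)

noncomputable def leafDefect (ℓ : ℕ) : Option (Fin 3 × Fin ℓ) → ℝ
  | none => 0
  | some (_, j) => if (j : ℕ) + 1 = ℓ then ratio ^ (ℓ + 1) else 0

theorem mulVec_testVec_none (hℓ : ℓ ≠ 0) :
    (adjMat (spider ℓ) *ᵥ testVec ℓ) none = 3 * ratio := by
  rw [adjMat_mulVec_apply, Fintype.sum_option, Fintype.sum_prod_type]
  simp only [SimpleGraph.irrefl, if_false, adj_none_some, testVec, zero_add]
  simp only [Fin.sum_ite_val_eq ℓ 0 (fun k ↦ ratio ^ (k + 1)), Nat.pos_of_ne_zero hℓ, if_true]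
  simp

theorem mulVec_testVec_some (i : Fin 3) (j : Fin ℓ) :
    (adjMat (spider ℓ) *ᵥ testVec ℓ) (some (i, j)) =
      3 * ratio * ratio ^ ((j : ℕ) + 1) - if (j : ℕ) + 1 = ℓ then ratio ^ (ℓ + 1) else 0 := by
  rw [adjMat_mulVec_apply, Fintype.sum_option, Fintype.sum_prod_type]
  simp only [SimpleGraph.adj_comm _ _ none, adj_none_some, adj_some_some, testVec, ite_and,
    Finset.sum_ite_irrel, Finset.sum_const_zero, Finset.sum_ite_eq, Finset.mem_univ, if_true]
  -- the parent of `(i, 0)` is the root, whose weight `1 = ratio ^ 0` continues the pattern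
  have parent : (if (j : ℕ) = 0 then 1 else 0) +
      ∑ k : Fin ℓ, (if (j : ℕ) = k + 1 then ratio ^ ((k : ℕ) + 1) else 0) = ratio ^ (j : ℕ) := by
    obtain ⟨_ | m, hm⟩ := j
    · simp
    · simp [eq_comm (a := m), Fin.sum_ite_val_eq ℓ m (fun k ↦ ratio ^ (k + 1)), show m < ℓ by omega]
  have child : ∑ k : Fin ℓ, (if (k : ℕ) = j + 1 then ratio ^ ((k : ℕ) + 1) else 0) =
      if (j : ℕ) + 1 < ℓ then ratio ^ ((j : ℕ) + 2) else 0 :=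
    Fin.sum_ite_val_eq ℓ _ (fun k ↦ ratio ^ (k + 1))
  have neighbours : ∑ k : Fin ℓ,
      (if (k : ℕ) = j + 1 ∨ (j : ℕ) = k + 1 then ratio ^ ((k : ℕ) + 1) else 0) =
      ∑ k : Fin ℓ, (if (k : ℕ) = j + 1 then ratio ^ ((k : ℕ) + 1) else 0) +
        ∑ k : Fin ℓ, (if (j : ℕ) = k + 1 then ratio ^ ((k : ℕ) + 1) else 0) := by
    rw [← Finset.sum_add_distrib]
    refine Finset.sum_congr rfl fun k _ ↦ ?_
    split_ifs <;> first | omega | simp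
  rw [neighbours, add_left_comm, parent, child]
  have h := two_mul_ratio_sq
  by_cases hj : (j : ℕ) + 1 < ℓ
  · rw [if_pos hj, if_neg hj.ne]
    linear_combination (-ratio ^ (j : ℕ)) * h
  · rw [if_neg hj, if_pos (by omega), show ℓ + 1 = (j : ℕ) + 2 by omega]
    linear_combination (-ratio ^ (j : ℕ)) * h

theorem adjMat_mulVec_testVec (hℓ : ℓ ≠ 0) :
    adjMat (spider ℓ) *ᵥ testVec ℓ = (3 * ratio) • testVec ℓ - leafDefect ℓ := by
  ext (_ | ⟨i, j⟩)
  · simp [mulVec_testVec_none hℓ, testVec, leafDefect]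
  · simp [mulVec_testVec_some, testVec, leafDefect]

theorem testVec_pos (u : Option (Fin 3 × Fin ℓ)) : 0 < testVec ℓ u := by
  rcases u with _ | ⟨_, _⟩
  · exact one_pos
  · exact pow_pos ratio_pos _

theorem leafDefect_nonneg : 0 ≤ leafDefect ℓ := by
  rintro (_ | ⟨_, _⟩)
  · exact le_rfl
  · simp only [leafDefect, Pi.zero_apply]
    split_ifs
    exacts [(pow_pos ratio_pos _).le, le_rfl]

theorem testVec_dotProduct_leafDefect (hℓ : ℓ ≠ 0) :
    testVec ℓ ⬝ᵥ leafDefect ℓ = 3 * ratio ^ (2 * ℓ + 1) := by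
  have hleaf : ∀ j : Fin ℓ, (j : ℕ) + 1 = ℓ ↔ (j : ℕ) = ℓ - 1 := fun j ↦ by omega
  simp only [dotProduct, Fintype.sum_option, Fintype.sum_prod_type, testVec, leafDefect,
    mul_ite, mul_zero, hleaf, Fin.sum_ite_val_eq ℓ (ℓ - 1) (fun k ↦ ratio ^ (k + 1) * ratio ^ (ℓ + 1))]
  rw [if_pos (by omega), Nat.sub_add_cancel (by omega), ← pow_add]
  simp
  ring

theorem one_le_testVec_dotProduct_self : 1 ≤ testVec ℓ ⬝ᵥ testVec ℓ := by
  rw [dotProduct, Fintype.sum_option]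
  simp only [testVec, mul_one, le_add_iff_nonneg_right]
  exact Finset.sum_nonneg fun _ _ ↦ mul_self_nonneg _

theorem graphEig_spider_mem_Icc (hℓ : ℓ ≠ 0) :
    graphEig (spider ℓ) 1 ∈ Set.Icc (3 * ratio - 3 * ratio ^ (2 * ℓ + 1)) (3 * ratio) := by
  have hA := isSymm_adjMat (spider ℓ)
  have hAx := adjMat_mulVec_testVec hℓ
  constructor
  · have hray := rayleigh_le_eig_one (isHermitian_iff_isSymm.mpr hA)
      (y := testVec ℓ) fun h ↦ (testVec_pos none).ne' (congrFun h none)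
    rw [hAx, dotProduct_sub, dotProduct_smul, smul_eq_mul, testVec_dotProduct_leafDefect hℓ] at hray
    have hS := one_le_testVec_dotProduct_self (ℓ := ℓ)
    calc 3 * ratio - 3 * ratio ^ (2 * ℓ + 1)
        ≤ 3 * ratio - 3 * ratio ^ (2 * ℓ + 1) / (testVec ℓ ⬝ᵥ testVec ℓ) := by
          gcongr
          exact div_le_self (by have := ratio_pos; positivity) hS
      _ = (3 * ratio * (testVec ℓ ⬝ᵥ testVec ℓ) - 3 * ratio ^ (2 * ℓ + 1)) /
            (testVec ℓ ⬝ᵥ testVec ℓ) := by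
          field_simp
      _ ≤ graphEig (spider ℓ) 1 := hray
  · refine eig_one_le_of_mulVec_le hA (adjMat_nonneg _) testVec_pos ?_
    rw [hAx]
    exact sub_le_self _ leafDefect_nonneg

end Spider

/-- `λ₁(T(ℓ,ℓ,ℓ)) → 3/√2` as `ℓ → ∞`. -/
theorem spider_eig_tendsto :
    Filter.Tendsto (fun ℓ : ℕ => graphEig (spider ℓ) 1) Filter.atTop
      (nhds (3 / Real.sqrt 2)) := by
  have hpow : Tendsto (fun ℓ : ℕ ↦ Spider.ratio ^ (2 * ℓ + 1)) atTop (𝓝 0) :=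
    (tendsto_pow_atTop_nhds_zero_of_lt_one Spider.ratio_pos.le Spider.ratio_lt_one).comp
      (tendsto_atTop_mono (fun ℓ ↦ (by omega : ℓ ≤ 2 * ℓ + 1)) tendsto_id)
  have hlower : Tendsto (fun ℓ : ℕ ↦ 3 * Spider.ratio - 3 * Spider.ratio ^ (2 * ℓ + 1)) atTop
      (𝓝 (3 * Spider.ratio)) := by
    simpa using tendsto_const_nhds.sub (hpow.const_mul 3)
  have hbounds : ∀ᶠ ℓ in atTop, graphEig (spider ℓ) 1 ∈
      Set.Icc (3 * Spider.ratio - 3 * Spider.ratio ^ (2 * ℓ + 1)) (3 * Spider.ratio) :=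
    eventually_atTop.mpr ⟨1, fun ℓ hℓ ↦ Spider.graphEig_spider_mem_Icc (by omega)⟩
  rw [div_eq_mul_inv]
  exact tendsto_of_tendsto_of_tendsto_of_le_of_le' hlower tendsto_const_nhds
    (hbounds.mono fun _ h ↦ h.1) (hbounds.mono fun _ h ↦ h.2)
end

section
/- For all integers p,q ≥ 2 and ℓ ≥ 1, the theta graph P(p,q,ℓ) consisting of three internally disjoint paths of lengths p, q, ℓ joining the same pair of endpoints has largest adjacency eigenvalue at least 3/√2. -/
/-!
Put weight `1` on the two branch vertices and weight `t ^ j`, `t = 1/√2`, on a path vertex at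
distance `j` from the nearer branch vertex. Because `3t = t⁻¹ + t`, each path vertex receives from
its two neighbours at least `3t` times its own weight, and each branch vertex receives at least `t`
from each of its three neighbours. So `A x ≥ 3t • x` for this nonnegative vector `x`, and
comparing `xᵀ A x` with `λ₁ xᵀ x` gives `λ₁ ≥ 3t = 3/√2`.
-/

open scoped Classical

/-- Theta graph `P(p,q,ℓ)`: two endpoints `Sum.inl 0`, `Sum.inl 1` joined by three internally
disjoint paths of lengths `p`, `q`, `ℓ` (in edges). -/
def thetaGraph (p q ℓ : ℕ) :
    SimpleGraph (Fin 2 ⊕ (Fin (p - 1) ⊕ Fin (q - 1) ⊕ Fin (ℓ - 1))) :=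
  SimpleGraph.fromRel fun u v =>
    match u, v with
    | Sum.inl x, Sum.inl y => (x : ℕ) = 0 ∧ (y : ℕ) = 1 ∧ (p = 1 ∨ q = 1 ∨ ℓ = 1)
    | Sum.inl x, Sum.inr (Sum.inl i) =>
        ((x : ℕ) = 0 ∧ (i : ℕ) = 0) ∨ ((x : ℕ) = 1 ∧ (i : ℕ) = p - 2)
    | Sum.inl x, Sum.inr (Sum.inr (Sum.inl i)) =>
        ((x : ℕ) = 0 ∧ (i : ℕ) = 0) ∨ ((x : ℕ) = 1 ∧ (i : ℕ) = q - 2)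
    | Sum.inl x, Sum.inr (Sum.inr (Sum.inr i)) =>
        ((x : ℕ) = 0 ∧ (i : ℕ) = 0) ∨ ((x : ℕ) = 1 ∧ (i : ℕ) = ℓ - 2)
    | Sum.inr (Sum.inl i), Sum.inr (Sum.inl j) => (j : ℕ) = (i : ℕ) + 1
    | Sum.inr (Sum.inr (Sum.inl i)), Sum.inr (Sum.inr (Sum.inl j)) => (j : ℕ) = (i : ℕ) + 1
    | Sum.inr (Sum.inr (Sum.inr i)), Sum.inr (Sum.inr (Sum.inr j)) => (j : ℕ) = (i : ℕ) + 1
    | _, _ => False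

open Matrix

section eig

variable {V : Type*} [Fintype V] [DecidableEq V] {A : Matrix V V ℝ}

theorem le_eig_one_of_isRoot {μ : ℝ} (h : A.charpoly.IsRoot μ) : μ ≤ eig A 1 := by
  have hmem : μ ∈ eigList A := by
    rw [eigList, Multiset.mem_sort]
    exact (Polynomial.mem_roots A.charpoly_monic.ne_zero).2 h
  have hne : eigList A ≠ [] := List.ne_nil_of_mem hmem
  rw [eig, List.getD_eq_getElem _ _ (by grind), ← List.getLast_eq_getElem hne]
  exact (Multiset.pairwise_sort _ _).rel_getLast hmem

theorem posSemidef_algebraMap_eig_one_sub (hA : A.IsHermitian) :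
    (algebraMap ℝ (Matrix V V ℝ) (eig A 1) - A).PosSemidef := by
  have hB : (algebraMap ℝ (Matrix V V ℝ) (eig A 1) - A).IsHermitian :=
    (isHermitian_diagonal _).sub hA
  rw [hB.posSemidef_iff_eigenvalues_nonneg]
  intro i
  have hmem := hB.eigenvalues_mem_spectrum_real i
  rw [← spectrum.singleton_sub_eq] at hmem
  obtain ⟨_, rfl, μ, hμ, hi⟩ := hmem
  have := le_eig_one_of_isRoot (Matrix.mem_spectrum_iff_isRoot_charpoly.mp hμ)
  simp only [Pi.zero_apply]
  linarith

theorem dotProduct_mulVec_le_eig_one (hA : A.IsHermitian) (x : V → ℝ) :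
    x ⬝ᵥ (A *ᵥ x) ≤ eig A 1 * (x ⬝ᵥ x) := by
  have := (posSemidef_algebraMap_eig_one_sub hA).dotProduct_mulVec_nonneg x
  rw [Algebra.algebraMap_eq_smul_one, sub_mulVec, smul_mulVec, one_mulVec, dotProduct_sub,
    dotProduct_smul, smul_eq_mul, star_trivial] at this
  linarith

theorem le_eig_one_of_le_mulVec (hA : A.IsHermitian) {x : V → ℝ} (hx0 : 0 ≤ x) (hx : x ≠ 0)
    {μ : ℝ} (h : ∀ v, μ * x v ≤ (A *ᵥ x) v) : μ ≤ eig A 1 := by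
  have hpos : 0 < x ⬝ᵥ x := by simpa only [star_trivial] using dotProduct_self_star_pos_iff.mpr hx
  have hμ : μ * (x ⬝ᵥ x) ≤ x ⬝ᵥ (A *ᵥ x) := by
    rw [dotProduct, dotProduct, Finset.mul_sum]
    refine Finset.sum_le_sum fun v _ => ?_
    rw [← mul_assoc, mul_comm (x v)]
    exact mul_le_mul_of_nonneg_right (h v) (hx0 v)
  exact le_of_mul_le_mul_right (hμ.trans (dotProduct_mulVec_le_eig_one hA x)) hpos

end eig

namespace SimpleGraph

variable {V : Type*} [Fintype V] [DecidableEq V] (G : SimpleGraph V)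

theorem adjMat_eq_adjMatrix : adjMat G = G.adjMatrix ℝ := rfl

theorem isHermitian_adjMat : (adjMat G).IsHermitian :=
  isHermitian_iff_isSymm.mpr G.isSymm_adjMatrix

theorem sum_le_adjMat_mulVec {x : V → ℝ} (hx : 0 ≤ x) {v : V} {s : Finset V}
    (hs : ∀ u ∈ s, G.Adj v u) : ∑ u ∈ s, x u ≤ (adjMat G *ᵥ x) v := by
  rw [adjMat_eq_adjMatrix, adjMatrix_mulVec_apply]
  exact Finset.sum_le_sum_of_subset_of_nonneg (fun u hu => by simpa using hs u hu)
    fun u _ _ => hx u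

end SimpleGraph

/-- `pathVertex a b f d` is vertex number `d` of the path `a, f 0, …, f (n - 1), b`. -/
def pathVertex {V : Type*} {n : ℕ} (a b : V) (f : Fin n → V) (d : ℕ) : V :=
  if d = 0 then a else if h : d - 1 < n then f ⟨d - 1, h⟩ else b

theorem pathVertex_injOn {V : Type*} {n : ℕ} {a b : V} {f : Fin n → V} (hab : a ≠ b)
    (hf : f.Injective) (ha : a ∉ Set.range f) (hb : b ∉ Set.range f) :
    Set.InjOn (pathVertex a b f) {d | d ≤ n + 1} := by
  intro d hd e he hde
  simp only [Set.mem_ofPred_eq] at hd he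
  unfold pathVertex at hde
  split_ifs at hde <;> grind [Fin.ext_iff]

abbrev ThetaVertex (p q ℓ : ℕ) := Fin 2 ⊕ (Fin (p - 1) ⊕ Fin (q - 1) ⊕ Fin (ℓ - 1))

def thetaLength (p q ℓ : ℕ) : Fin 3 → ℕ := ![p, q, ℓ]

def thetaPath (p q ℓ : ℕ) : Fin 3 → ℕ → ThetaVertex p q ℓ
  | 0 => pathVertex (.inl 0) (.inl 1) (.inr ∘ .inl)
  | 1 => pathVertex (.inl 0) (.inl 1) (.inr ∘ .inr ∘ .inl)
  | 2 => pathVertex (.inl 0) (.inl 1) (.inr ∘ .inr ∘ .inr)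

section thetaPath

variable {p q ℓ : ℕ}

theorem thetaPath_zero (k : Fin 3) : thetaPath p q ℓ k 0 = .inl 0 := by
  fin_cases k <;> rfl

theorem thetaPath_length (k : Fin 3) (hk : 1 ≤ thetaLength p q ℓ k) :
    thetaPath p q ℓ k (thetaLength p q ℓ k) = .inl 1 := by
  fin_cases k <;> simp [thetaLength] at hk ⊢ <;> simp [thetaPath, pathVertex] <;> omega

theorem thetaPath_injOn (k : Fin 3) (hk : 1 ≤ thetaLength p q ℓ k) :
    Set.InjOn (thetaPath p q ℓ k) {d | d ≤ thetaLength p q ℓ k} := by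
  fin_cases k <;> simp only [thetaLength, thetaPath] at hk ⊢ <;>
  · rw [← Nat.sub_add_cancel hk]
    refine pathVertex_injOn (by simp) (Sum.inr_injective.comp ?_) ?_ ?_ <;>
      simp [Function.Injective]

theorem thetaGraph_adj_thetaPath_succ (k : Fin 3) {d : ℕ} (hd : d < thetaLength p q ℓ k) :
    (thetaGraph p q ℓ).Adj (thetaPath p q ℓ k d) (thetaPath p q ℓ k (d + 1)) := by
  fin_cases k <;>
  · simp [thetaLength] at hd
    simp only [thetaPath, pathVertex, Nat.add_one_ne_zero, if_false, Nat.add_sub_cancel]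
    split_ifs <;> simp [thetaGraph]
    all_goals omega

theorem exists_eq_thetaPath (v : ThetaVertex p q ℓ) :
    v = .inl 0 ∨ v = .inl 1 ∨
      ∃ k d, 0 < d ∧ d < thetaLength p q ℓ k ∧ v = thetaPath p q ℓ k d := by
  rcases v with a | i | i | i
  · fin_cases a <;> simp
  on_goal 1 => refine .inr <| .inr ⟨0, i + 1, by omega, ?_, ?_⟩
  on_goal 3 => refine .inr <| .inr ⟨1, i + 1, by omega, ?_, ?_⟩
  on_goal 5 => refine .inr <| .inr ⟨2, i + 1, by omega, ?_, ?_⟩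
  all_goals simp [thetaLength, thetaPath, pathVertex]
  all_goals omega

theorem thetaPath_one_injective (hp : 2 ≤ p) (hq : 2 ≤ q) :
    (fun k => thetaPath p q ℓ k 1).Injective := by
  obtain ⟨p, rfl⟩ := Nat.exists_eq_add_of_le' hp
  obtain ⟨q, rfl⟩ := Nat.exists_eq_add_of_le' hq
  intro a b h
  rcases ℓ with _ | _ | ℓ <;>
    fin_cases a <;> fin_cases b <;> simp [thetaPath, pathVertex] at h ⊢

theorem thetaPath_length_sub_one_injective (hp : 2 ≤ p) (hq : 2 ≤ q) :
    (fun k => thetaPath p q ℓ k (thetaLength p q ℓ k - 1)).Injective := by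
  obtain ⟨p, rfl⟩ := Nat.exists_eq_add_of_le' hp
  obtain ⟨q, rfl⟩ := Nat.exists_eq_add_of_le' hq
  intro a b h
  rcases ℓ with _ | _ | ℓ <;>
    fin_cases a <;> fin_cases b <;> simp [thetaPath, pathVertex, thetaLength] at h ⊢

end thetaPath

def geomWeight (t : ℝ) (m d : ℕ) : ℝ := t ^ min d (m - d)

section geomWeight

variable {t : ℝ}

theorem three_mul_geomWeight_le (ht0 : 0 ≤ t) (ht : 2 * t ^ 2 ≤ 1) {m d : ℕ} (hd0 : 0 < d)
    (hdm : d < m) :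
    3 * t * geomWeight t m d ≤ geomWeight t m (d - 1) + geomWeight t m (d + 1) := by
  have ht1 : t ≤ 1 := by nlinarith
  obtain ⟨e, he⟩ : ∃ e, min d (m - d) = e + 1 := ⟨min d (m - d) - 1, by omega⟩
  have key : 3 * t * t ^ (e + 1) ≤ t ^ e + t ^ (e + 2) := by
    have h2 : 0 ≤ t ^ e * (1 - 2 * t ^ 2) := mul_nonneg (pow_nonneg ht0 e) (by linarith)
    linear_combination h2
  have hfar : ∀ n, n ≤ e + 2 → t ^ (e + 2) ≤ t ^ n := fun _ hn => pow_le_pow_of_le_one ht0 ht1 hn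
  unfold geomWeight
  rw [he]
  rcases le_total d (m - d) with h | h
  · rw [show min (d - 1) (m - (d - 1)) = e by omega]
    linarith [hfar (min (d + 1) (m - (d + 1))) (by omega)]
  · rw [show min (d + 1) (m - (d + 1)) = e by omega]
    linarith [hfar (min (d - 1) (m - (d - 1))) (by omega)]

theorem le_geomWeight (ht0 : 0 ≤ t) (ht1 : t ≤ 1) {m d : ℕ} (h : min d (m - d) ≤ 1) :
    t ≤ geomWeight t m d :=
  calc t = t ^ 1 := (pow_one t).symm
    _ ≤ t ^ min d (m - d) := pow_le_pow_of_le_one ht0 ht1 h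

end geomWeight

def thetaWeight (t : ℝ) (p q ℓ : ℕ) : ThetaVertex p q ℓ → ℝ
  | .inl _ => 1
  | .inr (.inl i) => geomWeight t p (i + 1)
  | .inr (.inr (.inl i)) => geomWeight t q (i + 1)
  | .inr (.inr (.inr i)) => geomWeight t ℓ (i + 1)

section thetaWeight

variable {t : ℝ} {p q ℓ : ℕ}

theorem thetaWeight_nonneg (ht0 : 0 ≤ t) : 0 ≤ thetaWeight t p q ℓ := by
  rintro (_ | _ | _ | _) <;> simp only [thetaWeight, geomWeight, Pi.zero_apply] <;> positivity

theorem thetaWeight_thetaPath (k : Fin 3) {d : ℕ} (hd : d ≤ thetaLength p q ℓ k) :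
    thetaWeight t p q ℓ (thetaPath p q ℓ k d) = geomWeight t (thetaLength p q ℓ k) d := by
  fin_cases k <;> simp [thetaLength] at hd ⊢ <;> simp only [thetaPath, pathVertex] <;>
    split_ifs <;> simp only [thetaWeight, geomWeight, Function.comp_apply]
  all_goals first
    | rw [Nat.min_eq_zero_iff.mpr (by omega), pow_zero]
    | rw [Nat.sub_add_cancel (by omega : 1 ≤ d)]

theorem three_mul_le_adjMat_mulVec_of_endpoint (ht0 : 0 ≤ t) (ht1 : t ≤ 1)
    {v : ThetaVertex p q ℓ} (f : Fin 3 → ℕ) (hf : (fun k => thetaPath p q ℓ k (f k)).Injective)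
    (hadj : ∀ k, (thetaGraph p q ℓ).Adj v (thetaPath p q ℓ k (f k)))
    (hle : ∀ k, f k ≤ thetaLength p q ℓ k)
    (hmin : ∀ k, min (f k) (thetaLength p q ℓ k - f k) ≤ 1) :
    3 * t ≤ (adjMat (thetaGraph p q ℓ) *ᵥ thetaWeight t p q ℓ) v := by
  calc 3 * t = ∑ _k : Fin 3, t := by simp
    _ ≤ ∑ k, thetaWeight t p q ℓ (thetaPath p q ℓ k (f k)) := by
      refine Finset.sum_le_sum fun k _ => ?_
      rw [thetaWeight_thetaPath k (hle k)]
      exact le_geomWeight ht0 ht1 (hmin k)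
    _ = ∑ u ∈ Finset.univ.image fun k => thetaPath p q ℓ k (f k), thetaWeight t p q ℓ u :=
      (Finset.sum_image fun k _ l _ hkl => hf hkl).symm
    _ ≤ _ := SimpleGraph.sum_le_adjMat_mulVec _ (thetaWeight_nonneg ht0) (by simpa using hadj)

theorem three_mul_thetaWeight_le_adjMat_mulVec_thetaPath (ht0 : 0 ≤ t) (ht : 2 * t ^ 2 ≤ 1)
    {k : Fin 3} {d : ℕ} (hd0 : 0 < d) (hd : d < thetaLength p q ℓ k) :
    3 * t * thetaWeight t p q ℓ (thetaPath p q ℓ k d) ≤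
      (adjMat (thetaGraph p q ℓ) *ᵥ thetaWeight t p q ℓ) (thetaPath p q ℓ k d) := by
  have hne : thetaPath p q ℓ k (d - 1) ≠ thetaPath p q ℓ k (d + 1) := fun h => by
    have := thetaPath_injOn k (by omega) (by grind) (by grind) h
    omega
  have hprev := thetaGraph_adj_thetaPath_succ k (show d - 1 < thetaLength p q ℓ k by omega)
  rw [Nat.sub_add_cancel hd0] at hprev
  have hsum := SimpleGraph.sum_le_adjMat_mulVec _ (thetaWeight_nonneg ht0)
    (s := {thetaPath p q ℓ k (d - 1), thetaPath p q ℓ k (d + 1)})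
    (by simpa using ⟨hprev.symm, thetaGraph_adj_thetaPath_succ k hd⟩)
  rw [Finset.sum_pair hne, thetaWeight_thetaPath k (by omega), thetaWeight_thetaPath k (by omega)]
    at hsum
  rw [thetaWeight_thetaPath k hd.le]
  exact (three_mul_geomWeight_le ht0 ht hd0 hd).trans hsum

theorem three_mul_thetaWeight_le_adjMat_mulVec (hp : 2 ≤ p) (hq : 2 ≤ q) (hℓ : 1 ≤ ℓ)
    (ht0 : 0 ≤ t) (ht : 2 * t ^ 2 ≤ 1) (v : ThetaVertex p q ℓ) :
    3 * t * thetaWeight t p q ℓ v ≤ (adjMat (thetaGraph p q ℓ) *ᵥ thetaWeight t p q ℓ) v := by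
  have ht1 : t ≤ 1 := by nlinarith
  have hlen : ∀ k, 1 ≤ thetaLength p q ℓ k := by
    intro k; fin_cases k <;> simp [thetaLength] <;> omega
  rcases exists_eq_thetaPath v with rfl | rfl | ⟨k, d, hd0, hd, rfl⟩
  · rw [thetaWeight, mul_one]
    refine three_mul_le_adjMat_mulVec_of_endpoint ht0 ht1 (fun _ => 1)
      (thetaPath_one_injective hp hq) (fun k => ?_) (hlen ·) (fun k => by omega)
    simpa [thetaPath_zero] using thetaGraph_adj_thetaPath_succ k (hlen k)
  · rw [thetaWeight, mul_one]
    refine three_mul_le_adjMat_mulVec_of_endpoint ht0 ht1 (fun k => thetaLength p q ℓ k - 1)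
      (thetaPath_length_sub_one_injective hp hq) (fun k => ?_) (fun k => by omega)
      (fun k => by omega)
    have hlast : thetaLength p q ℓ k - 1 < thetaLength p q ℓ k := by have := hlen k; omega
    have := thetaGraph_adj_thetaPath_succ k hlast
    rw [Nat.sub_add_cancel (hlen k), thetaPath_length k (hlen k)] at this
    exact this.symm
  · exact three_mul_thetaWeight_le_adjMat_mulVec_thetaPath ht0 ht hd0 hd

end thetaWeight

theorem three_mul_le_graphEig_thetaGraph {p q ℓ : ℕ} (hp : 2 ≤ p) (hq : 2 ≤ q) (hℓ : 1 ≤ ℓ)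
    {t : ℝ} (ht0 : 0 ≤ t) (ht : 2 * t ^ 2 ≤ 1) : 3 * t ≤ graphEig (thetaGraph p q ℓ) 1 :=
  le_eig_one_of_le_mulVec (SimpleGraph.isHermitian_adjMat _) (thetaWeight_nonneg ht0)
    (fun h => by simpa [thetaWeight] using congrFun h (.inl 0))
    (three_mul_thetaWeight_le_adjMat_mulVec hp hq hℓ ht0 ht)

/-- For `p,q ≥ 2`, `ℓ ≥ 1`, the theta graph `P(p,q,ℓ)` satisfies
`λ₁(P(p,q,ℓ)) ≥ 3/√2`. -/
theorem theta_eig_ge (p q ℓ : ℕ) (hp : 2 ≤ p) (hq : 2 ≤ q) (hℓ : 1 ≤ ℓ) :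
    3 / Real.sqrt 2 ≤ graphEig (thetaGraph p q ℓ) 1 := by
  have h := three_mul_le_graphEig_thetaGraph hp hq hℓ (t := (Real.sqrt 2)⁻¹) (by positivity)
    (by norm_num [inv_pow])
  rwa [← div_eq_mul_inv] at h
end

section
/- Any connected finite simple graph whose largest adjacency eigenvalue is strictly less than 3/√2 has cyclomatic number at most 1 (i.e., it has at most one cycle). -/
open scoped Classical

/-!
If `|E| > |V|`, repeatedly deleting a vertex with at most one neighbour keeps the degree sum at least
`2 |K| + 2`, so this peeling stops at a vertex set `L` in which every vertex has at least two
neighbours and some vertex `v₀` has at least three. On the component of `v₀` in the graph induced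
on `L`, the vector `x_v = (1/√2) ^ dist(v₀, v)` satisfies `(A x)_v ≥ (3/√2) x_v` at every vertex,
so the Rayleigh quotient of `x`, and with it `λ₁(G)`, is at least `3/√2`.
-/

open Finset Matrix Polynomial
open scoped Pointwise

section Spectral

variable {V : Type*} [Fintype V] [DecidableEq V]

lemma le_eig_one_of_mem_roots {A : Matrix V V ℝ} {μ : ℝ} (hμ : μ ∈ A.charpoly.roots) :
    μ ≤ eig A 1 := by
  have hmem : μ ∈ eigList A := (Multiset.mem_sort _).mpr hμ
  obtain ⟨i, hi, rfl⟩ := List.getElem_of_mem hmem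
  have hlast : (eigList A).length - 1 < (eigList A).length := by omega
  rw [eig, List.getD_eq_getElem _ _ hlast]
  rcases (Nat.le_sub_one_of_lt hi).lt_or_eq with hlt | heq
  · exact List.pairwise_iff_getElem.mp (Multiset.pairwise_sort _ _) _ _ hi hlast hlt
  · simp only [heq, le_refl]

lemma dotProduct_mulVec_le_eig_one_mul {A : Matrix V V ℝ} (hA : A.IsHermitian) (x : V → ℝ) :
    x ⬝ᵥ A *ᵥ x ≤ eig A 1 * (x ⬝ᵥ x) := by
  set B := algebraMap ℝ (Matrix V V ℝ) (eig A 1) - A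
  have hB : B.IsHermitian := (isHermitian_diagonal _).sub hA
  have hB_psd : B.PosSemidef := by
    refine hB.posSemidef_iff_eigenvalues_nonneg.mpr fun i => ?_
    obtain ⟨_, rfl, μ, hμ, hz⟩ : hB.eigenvalues i ∈ {eig A 1} - spectrum ℝ A := by
      rw [spectrum.singleton_sub_eq]
      exact hB.eigenvalues_mem_spectrum_real i
    have hμ_le : μ ≤ eig A 1 := le_eig_one_of_mem_roots <|
      (mem_roots A.charpoly_monic.ne_zero).mpr (mem_spectrum_iff_isRoot_charpoly.mp hμ)
    change eig A 1 - μ = _ at hz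
    change 0 ≤ hB.eigenvalues i
    linarith
  have hquad := hB_psd.dotProduct_mulVec_nonneg x
  simp only [B, star_trivial, sub_mulVec, dotProduct_sub, Algebra.algebraMap_eq_smul_one,
    smul_mulVec, one_mulVec, dotProduct_smul, smul_eq_mul] at hquad
  linarith

lemma le_eig_one_of_mul_le_dotProduct_mulVec {A : Matrix V V ℝ} (hA : A.IsHermitian)
    {x : V → ℝ} (hx : x ≠ 0) {c : ℝ} (hc : c * (x ⬝ᵥ x) ≤ x ⬝ᵥ A *ᵥ x) : c ≤ eig A 1 := by
  have hpos : 0 < x ⬝ᵥ x := by simpa using dotProduct_self_star_pos_iff.mpr hx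
  exact le_of_mul_le_mul_right (hc.trans (dotProduct_mulVec_le_eig_one_mul hA x)) hpos

end Spectral

namespace SimpleGraph

lemma edgeCount_eq_card_edgeFinset {V : Type*} [Fintype V] (G : SimpleGraph V) :
    edgeCount G = #G.edgeFinset := by
  simp only [edgeCount, edgeFinset, Set.toFinite_toFinset]

section Core

variable {V : Type*} [DecidableEq V] (G : SimpleGraph V)

lemma sum_card_filter_adj_eq_erase {K : Finset V} {v : V} (hv : v ∈ K) :
    ∑ w ∈ K, #{u ∈ K | G.Adj w u} =
      ∑ w ∈ K.erase v, #{u ∈ K.erase v | G.Adj w u} + 2 * #{u ∈ K | G.Adj v u} := by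
  have hrest : ∀ w ∈ K.erase v,
      #{u ∈ K | G.Adj w u} = #{u ∈ K.erase v | G.Adj w u} + if G.Adj w v then 1 else 0 := by
    intro w _
    conv_lhs => rw [← insert_erase hv, filter_insert]
    split_ifs <;> simp [card_insert_of_notMem]
  have hback : ∑ w ∈ K.erase v, (if G.Adj w v then 1 else 0) = #{u ∈ K | G.Adj v u} := by
    rw [← card_filter, filter_erase, erase_eq_of_notMem (by simp)]
    simp only [G.adj_comm]
  rw [← sum_erase_add _ _ hv, sum_congr rfl hrest, sum_add_distrib, hback]
  ring

theorem exists_core_of_two_mul_card_add_two_le_sum (K : Finset V)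
    (hK : 2 * #K + 2 ≤ ∑ v ∈ K, #{w ∈ K | G.Adj v w}) :
    ∃ L : Finset V, (∀ v ∈ L, 2 ≤ #{w ∈ L | G.Adj v w}) ∧
      ∃ v₀ ∈ L, 3 ≤ #{w ∈ L | G.Adj v₀ w} := by
  induction K using Finset.strongInduction with
  | H K ih =>
    by_cases! hmin : ∀ v ∈ K, 2 ≤ #{w ∈ K | G.Adj v w}
    · refine ⟨K, hmin, ?_⟩
      by_contra! hmax
      have hsum : ∑ v ∈ K, #{w ∈ K | G.Adj v w} ≤ ∑ _v ∈ K, 2 :=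
        sum_le_sum fun v hv => Nat.le_of_lt_succ (hmax v hv)
      rw [sum_const, smul_eq_mul] at hsum
      omega
    · obtain ⟨v, hv, hdeg⟩ := hmin
      refine ih (K.erase v) (erase_ssubset hv) ?_
      have := G.sum_card_filter_adj_eq_erase hv
      have := card_erase_add_one hv
      omega

variable [Fintype V]

lemma degree_spanningCoe_induce_top (L : Finset V) (v : V) :
    ((⊤ : G.Subgraph).induce L).spanningCoe.degree v =
      if v ∈ L then #{w ∈ L | G.Adj v w} else 0 := by
  rw [← card_neighborFinset_eq_degree]
  split_ifs with hv
  · congr 1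
    ext w
    simp [hv]
  · rw [card_eq_zero, eq_empty_iff_forall_notMem]
    simp [hv]

theorem exists_le_core_of_card_lt_edgeCount (hE : Fintype.card V < edgeCount G) :
    ∃ H ≤ G, (∀ v, 0 < H.degree v → 2 ≤ H.degree v) ∧ ∃ v₀, 3 ≤ H.degree v₀ := by
  have hsum : 2 * #(univ : Finset V) + 2 ≤ ∑ v, #{w | G.Adj v w} := by
    simp only [← neighborFinset_eq_filter, card_neighborFinset_eq_degree,
      sum_degrees_eq_twice_card_edges, card_univ, ← edgeCount_eq_card_edgeFinset]
    omega
  obtain ⟨L, hL, v₀, hv₀, h3⟩ := G.exists_core_of_two_mul_card_add_two_le_sum univ hsum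
  refine ⟨((⊤ : G.Subgraph).induce L).spanningCoe, Subgraph.spanningCoe_le _, fun v hv => ?_, v₀,
    by rwa [degree_spanningCoe_induce_top, if_pos hv₀]⟩
  rw [degree_spanningCoe_induce_top] at hv ⊢
  split_ifs at hv ⊢ with hvL
  exacts [hL v hvL, (lt_irrefl 0 hv).elim]

end Core

section TestVector

variable {V : Type*} {H : SimpleGraph V}

lemma Reachable.exists_adj_dist_add_one_eq {u v : V} (h : H.Reachable u v) (hne : u ≠ v) :
    ∃ w, H.Adj v w ∧ H.dist u w + 1 = H.dist u v := by
  obtain ⟨p, hp⟩ := h.symm.exists_walk_length_eq_dist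
  cases p with
  | nil => exact absurd rfl hne
  | @cons _ w _ hvw q =>
    refine ⟨w, hvw, ?_⟩
    have hq : H.dist w u ≤ q.length := dist_le q
    have htri := hvw.reachable.dist_triangle_left u
    rw [dist_eq_one_iff_adj.mpr hvw] at htri
    rw [Walk.length_cons] at hp
    rw [dist_comm, dist_comm (u := u)]
    omega

variable (H) (v₀ : V) (r : ℝ)

/-- The case split is needed because `H.dist v₀ v` is the junk value `0` off the component. -/
noncomputable def distPow (v : V) : ℝ :=
  if H.Reachable v₀ v then r ^ H.dist v₀ v else 0

variable {H v₀ r}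

lemma distPow_nonneg (hr : 0 ≤ r) (v : V) : 0 ≤ H.distPow v₀ r v := by
  unfold distPow
  split_ifs <;> positivity

lemma pow_dist_add_one_le_distPow (hr₀ : 0 ≤ r) (hr₁ : r ≤ 1) {v w : V}
    (hv : H.Reachable v₀ v) (hvw : H.Adj v w) : r ^ (H.dist v₀ v + 1) ≤ H.distPow v₀ r w := by
  have hdist : H.dist v₀ w ≤ H.dist v₀ v + 1 := by
    simpa [dist_eq_one_iff_adj.mpr hvw] using hvw.reachable.dist_triangle_right v₀
  rw [distPow, if_pos (hv.trans hvw.reachable)]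
  exact pow_le_pow_of_le_one hr₀ hr₁ hdist

/-- With `r = 1/√2`: at `v₀` each of the at least three neighbours weighs `r`; elsewhere the
neighbour one step closer to `v₀` weighs `x_v / r` and a second one at least `r x_v`, and
`1/r + r = 3 r`. -/
lemma three_mul_distPow_le_sum_neighborFinset [∀ v, Fintype (H.neighborSet v)]
    (hleaf : ∀ v, 0 < H.degree v → 2 ≤ H.degree v)
    (h3 : 3 ≤ H.degree v₀) (v : V) :
    3 * (√2)⁻¹ * H.distPow v₀ (√2)⁻¹ v ≤ ∑ w ∈ H.neighborFinset v, H.distPow v₀ (√2)⁻¹ w := by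
  set r : ℝ := (√2)⁻¹
  have hr₀ : 0 ≤ r := by positivity
  have hr₁ : r ≤ 1 := inv_le_one_of_one_le₀ (by simp [Real.one_le_sqrt])
  have hrr : r * r = 1 / 2 := by rw [← mul_inv, Real.mul_self_sqrt zero_le_two, one_div]
  have hnonneg : ∀ w ∈ H.neighborFinset v, 0 ≤ H.distPow v₀ r w :=
    fun w _ => distPow_nonneg hr₀ w
  by_cases hv : H.Reachable v₀ v
  swap
  · simpa [distPow, hv] using sum_nonneg hnonneg
  rcases eq_or_ne v₀ v with rfl | hne
  · have hle : ∀ w ∈ H.neighborFinset v₀, r ≤ H.distPow v₀ r w := fun w hw => by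
      simpa using pow_dist_add_one_le_distPow hr₀ hr₁ hv ((mem_neighborFinset _ _ _).mp hw)
    have hsum := card_nsmul_le_sum _ _ _ hle
    rw [nsmul_eq_mul, card_neighborFinset_eq_degree] at hsum
    have h3' : (3 : ℝ) ≤ H.degree v₀ := by exact_mod_cast h3
    have hx₀ : H.distPow v₀ r v₀ = 1 := by simp [distPow]
    rw [hx₀]
    nlinarith
  · obtain ⟨w₁, hvw₁, hw₁⟩ := hv.exists_adj_dist_add_one_eq hne
    have hw₁mem : w₁ ∈ H.neighborFinset v := (mem_neighborFinset _ _ _).mpr hvw₁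
    have hcard : 1 < #(H.neighborFinset v) := by
      rw [card_neighborFinset_eq_degree]
      exact hleaf v ((H.degree_pos_iff_exists_adj v).mpr ⟨w₁, hvw₁⟩)
    obtain ⟨w₂, hw₂mem, hne₂⟩ := exists_mem_ne hcard w₁
    have hx₁ : H.distPow v₀ r w₁ = r ^ H.dist v₀ w₁ := by
      rw [distPow, if_pos (hv.trans hvw₁.reachable)]
    have hx₂ := pow_dist_add_one_le_distPow hr₀ hr₁ hv ((mem_neighborFinset _ _ _).mp hw₂mem)
    have hsum := add_le_sum hnonneg hw₁mem hw₂mem hne₂.symm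
    rw [hx₁] at hsum
    rw [← hw₁] at hx₂
    rw [distPow, if_pos hv, ← hw₁]
    calc 3 * r * r ^ (H.dist v₀ w₁ + 1)
        = r ^ H.dist v₀ w₁ + r ^ (H.dist v₀ w₁ + 1 + 1) := by
          rw [pow_succ, pow_succ, pow_succ]
          linear_combination (2 * r ^ H.dist v₀ w₁) * hrr
      _ ≤ _ := by linarith

theorem three_div_sqrt_two_le_graphEig_one_of_le [Fintype V] [DecidableEq V]
    {G : SimpleGraph V} (hHG : H ≤ G) (hleaf : ∀ v, 0 < H.degree v → 2 ≤ H.degree v)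
    (h3 : 3 ≤ H.degree v₀) : 3 / √2 ≤ graphEig G 1 := by
  set x := H.distPow v₀ (√2)⁻¹
  have hx₀ : ∀ v, 0 ≤ x v := distPow_nonneg (by positivity)
  have hx : x ≠ 0 := fun h => by simpa [x, distPow] using congr_fun h v₀
  have hpoint : ∀ v, 3 / √2 * x v ≤ (G.adjMatrix ℝ *ᵥ x) v := fun v => calc
    3 / √2 * x v ≤ ∑ w ∈ H.neighborFinset v, x w := by
      simpa only [div_eq_mul_inv] using three_mul_distPow_le_sum_neighborFinset hleaf h3 v
    _ ≤ ∑ w ∈ G.neighborFinset v, x w :=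
      sum_le_sum_of_subset_of_nonneg (fun w hw => by simpa using hHG (by simpa using hw))
        fun w _ _ => hx₀ w
    _ = (G.adjMatrix ℝ *ᵥ x) v := (adjMatrix_mulVec_apply G v x).symm
  refine le_eig_one_of_mul_le_dotProduct_mulVec (isHermitian_iff_isSymm.mpr G.isSymm_adjMatrix)
    hx ?_
  rw [dotProduct, dotProduct, mul_sum]
  exact sum_le_sum fun v _ => by nlinarith [hpoint v, hx₀ v]

end TestVector

end SimpleGraph

theorem cyclomatic_le_one_of_eig_lt_general {V : Type*} [Fintype V] [DecidableEq V]
    (G : SimpleGraph V) (h : graphEig G 1 < 3 / Real.sqrt 2) :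
    cyclomatic G ≤ 1 := by
  by_contra! hcyc
  obtain ⟨H, hHG, hleaf, v₀, h3⟩ :=
    G.exists_le_core_of_card_lt_edgeCount (by unfold cyclomatic at hcyc; omega)
  exact (SimpleGraph.three_div_sqrt_two_le_graphEig_one_of_le hHG hleaf h3).not_gt h

/-- A connected finite simple graph with `λ₁(G) < 3/√2` has cyclomatic
number `|E| - |V| + 1` at most `1`. -/
theorem cyclomatic_le_one_of_eig_lt {V : Type*} [Fintype V] [DecidableEq V]
    (G : SimpleGraph V) (hG : G.Connected) (h : graphEig G 1 < 3 / Real.sqrt 2) :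
    cyclomatic G ≤ 1 :=
  cyclomatic_le_one_of_eig_lt_general G h
end

section
/- Let G be a finite simple graph with connected components G₁,...,G_t such that the matrix λI − A_G + (1/2)J is positive semidefinite, λ₁(G₁) = λ₁(G) > λ, and λ is an eigenvalue of A_G. Then λ is not the largest eigenvalue of A_{G_j} for any j ≥ 2; consequently dim ker(λI − A_G) = dim ker(λI − A_{G₁}). -/
open scoped Classical

open Matrix Polynomial
set_option linter.unusedSectionVars false
set_option linter.unusedVariables false



section MatrixAux
variable {m : Type*} [Fintype m] [DecidableEq m]

lemma my_charpoly_eval (A : Matrix m m ℝ) (μ : ℝ) :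
    A.charpoly.eval μ = (μ • (1 : Matrix m m ℝ) - A).det := by
  rw [Matrix.charpoly, eval_det, matPolyEquiv_charmatrix]
  congr 1
  rw [eval_sub, eval_X, eval_C]
  congr 1
  exact (Matrix.smul_one_eq_diagonal μ).symm

lemma my_eigenvalue_iff_root (A : Matrix m m ℝ) (μ : ℝ) :
    (∃ v, v ≠ 0 ∧ A *ᵥ v = μ • v) ↔ μ ∈ A.charpoly.roots := by
  rw [mem_roots (A.charpoly_monic.ne_zero), IsRoot, my_charpoly_eval,
    ← Matrix.exists_mulVec_eq_zero_iff]
  constructor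
  · rintro ⟨v, hv, h⟩
    exact ⟨v, hv, by rw [sub_mulVec, smul_mulVec, one_mulVec, h, sub_self]⟩
  · rintro ⟨v, hv, h⟩
    refine ⟨v, hv, ?_⟩
    rw [sub_mulVec, smul_mulVec, one_mulVec, sub_eq_zero] at h
    exact h.symm

lemma my_root_le_eig_one {A : Matrix m m ℝ} {μ : ℝ} (h : μ ∈ A.charpoly.roots) :
    μ ≤ eig A 1 := by
  have hmem : μ ∈ eigList A := by
    rw [eigList, Multiset.mem_sort]; exact h
  have hlen : 0 < (eigList A).length := List.length_pos_iff.mpr (List.ne_nil_of_mem hmem)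
  have hs : (eigList A).Pairwise (· ≤ ·) := Multiset.pairwise_sort _ _
  obtain ⟨i, hi, rfl⟩ := List.mem_iff_getElem.mp hmem
  rw [eig, List.getD_eq_getElem _ _ (by omega : (eigList A).length - 1 < (eigList A).length)]
  rcases eq_or_lt_of_le (by omega : i ≤ (eigList A).length - 1) with h' | h'
  · simp [h']
  · exact List.pairwise_iff_getElem.mp hs i _ hi (by omega) h'

lemma my_eig_one_mem {A : Matrix m m ℝ} (h : A.charpoly.roots ≠ 0) :
    eig A 1 ∈ A.charpoly.roots := by
  have hlen : 0 < (eigList A).length := by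
    rw [eigList, Multiset.length_sort]
    exact Multiset.card_pos.mpr h
  rw [eig, List.getD_eq_getElem _ _ (by omega : (eigList A).length - 1 < (eigList A).length)]
  have := List.getElem_mem (show (eigList A).length - 1 < (eigList A).length by omega)
  exact (Multiset.mem_sort (· ≤ ·)).mp this

end MatrixAux



section SpecAux
variable {m : Type*} [Fintype m] [DecidableEq m] {A : Matrix m m ℝ}

lemma my_eigenvalues_isRoot (hA : A.IsHermitian) (i : m) :
    hA.eigenvalues i ∈ A.charpoly.roots := by
  refine (my_eigenvalue_iff_root A _).mp ⟨⇑(hA.eigenvectorBasis i), ?_, hA.mulVec_eigenvectorBasis i⟩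
  intro h0
  refine hA.eigenvectorBasis.orthonormal.ne_zero i ?_
  ext j
  exact congrFun h0 j

lemma my_roots_ne_zero [Nonempty m] (hA : A.IsHermitian) : A.charpoly.roots ≠ 0 := by
  intro h
  have := my_eigenvalues_isRoot hA (Classical.arbitrary m)
  rw [h] at this
  simp at this

lemma my_psd_sub [Nonempty m] (hA : A.IsHermitian) :
    (eig A 1 • (1 : Matrix m m ℝ) - A).PosSemidef := by
  have hle : ∀ i, hA.eigenvalues i ≤ eig A 1 := fun i =>
    my_root_le_eig_one (my_eigenvalues_isRoot hA i)
  set U : Matrix m m ℝ := (hA.eigenvectorUnitary : Matrix m m ℝ) with hU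
  have hUU : U * star U = 1 := Matrix.mem_unitaryGroup_iff.mp hA.eigenvectorUnitary.2
  have key : eig A 1 • (1 : Matrix m m ℝ) - A
      = U * diagonal (fun i => eig A 1 - hA.eigenvalues i) * star U := by
    have hdiag : diagonal (fun i => eig A 1 - hA.eigenvalues i)
        = eig A 1 • (1 : Matrix m m ℝ) - diagonal hA.eigenvalues := by
      rw [Matrix.smul_one_eq_diagonal, diagonal_sub]
    rw [hdiag, Matrix.mul_sub, Matrix.sub_mul, mul_smul_comm, Matrix.mul_one,
      smul_mul_assoc, hUU]
    have := hA.spectral_theorem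
    simp only [RCLike.ofReal_real_eq_id, Function.comp_id, Function.id_comp,
      Unitary.conjStarAlgAut_apply] at this
    rw [← hU] at this
    rw [← this]
  rw [key]
  have hd : Matrix.PosSemidef (diagonal (fun i => eig A 1 - hA.eigenvalues i)) :=
    Matrix.PosSemidef.diagonal (fun i => sub_nonneg.mpr (hle i))
  simpa [Matrix.star_eq_conjTranspose] using hd.mul_mul_conjTranspose_same U

lemma my_exists_nonneg_eigenvector [Nonempty m] (hA : A.IsHermitian)
    (hnn : ∀ i j, 0 ≤ A i j) :
    ∃ f : m → ℝ, (∀ i, 0 ≤ f i) ∧ f ≠ 0 ∧ A *ᵥ f = eig A 1 • f := by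
  obtain ⟨v, hv, hAv⟩ := (my_eigenvalue_iff_root A _).mpr (my_eig_one_mem (my_roots_ne_zero hA))
  set lam1 := eig A 1
  set f : m → ℝ := fun i => |v i| with hf
  have hfne : f ≠ 0 := fun h => hv (by ext i; simpa [hf, abs_eq_zero] using congrFun h i)
  have hff : f ⬝ᵥ f = v ⬝ᵥ v := by
    simp only [dotProduct, hf]
    exact Finset.sum_congr rfl fun i _ => by rw [← abs_mul, abs_mul_self]
  have hbound : v ⬝ᵥ (A *ᵥ v) ≤ f ⬝ᵥ (A *ᵥ f) := by
    simp only [dotProduct, mulVec, dotProduct]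
    refine Finset.sum_le_sum fun i _ => ?_
    rw [Finset.mul_sum, Finset.mul_sum]
    refine Finset.sum_le_sum fun j _ => ?_
    calc v i * (A i j * v j) ≤ |v i * (A i j * v j)| := le_abs_self _
      _ = f i * (A i j * f j) := by
          rw [abs_mul, abs_mul, abs_of_nonneg (hnn i j), hf]
  have hq : f ⬝ᵥ ((lam1 • (1 : Matrix m m ℝ) - A) *ᵥ f) ≤ 0 := by
    rw [sub_mulVec, smul_mulVec, one_mulVec, dotProduct_sub, dotProduct_smul]
    have : v ⬝ᵥ (A *ᵥ v) = lam1 * (v ⬝ᵥ v) := by rw [hAv, dotProduct_smul]; rfl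
    have h2 : lam1 * (f ⬝ᵥ f) ≤ f ⬝ᵥ (A *ᵥ f) := by
      rw [hff]
      calc lam1 * (v ⬝ᵥ v) = v ⬝ᵥ (A *ᵥ v) := this.symm
        _ ≤ f ⬝ᵥ (A *ᵥ f) := hbound
    simpa [smul_eq_mul] using sub_nonpos.mpr h2
  have hpsd := my_psd_sub hA
  have hq0 : f ⬝ᵥ ((lam1 • (1 : Matrix m m ℝ) - A) *ᵥ f) = 0 := by
    refine le_antisymm hq ?_
    have := hpsd.dotProduct_mulVec_nonneg f
    rwa [star_trivial] at this
  have hker : (lam1 • (1 : Matrix m m ℝ) - A) *ᵥ f = 0 := by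
    have := (hpsd.dotProduct_mulVec_zero_iff f).mp (by rwa [star_trivial])
    exact this
  refine ⟨f, fun i => abs_nonneg _, hfne, ?_⟩
  rw [sub_mulVec, smul_mulVec, one_mulVec, sub_eq_zero] at hker
  exact hker.symm

lemma my_eigenvalue_le [Nonempty m] {μ : ℝ} {v : m → ℝ} (hv : v ≠ 0)
    (hAv : A *ᵥ v = μ • v) : μ ≤ eig A 1 :=
  my_root_le_eig_one ((my_eigenvalue_iff_root A μ).mp ⟨v, hv, hAv⟩)

end SpecAux



section GraphAux
variable {V : Type*} [Fintype V] [DecidableEq V]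

lemma my_adjMat_isHermitian (G : SimpleGraph V) : (adjMat G).IsHermitian :=
  Matrix.ext fun i j => by
    simp [adjMat, Matrix.conjTranspose_apply, G.adj_comm]

lemma my_adjMat_nonneg (G : SimpleGraph V) (i j : V) : 0 ≤ adjMat G i j := by
  simp only [adjMat, Matrix.of_apply]
  split <;> norm_num

lemma my_sum_subtype {S : Set V} [Fintype ↥S] (f : V → ℝ) (h : ∀ v, v ∉ S → f v = 0) :
    ∑ v, f v = ∑ i : S, f ↑i := by
  rw [← Finset.sum_subset (Finset.subset_univ S.toFinset)
    (fun x _ hx => h x (by simpa using hx))]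
  exact Finset.sum_subtype S.toFinset (by simp) f

/-- Extension of a function on a subset by zero. -/
noncomputable def extFun {S : Set V} (g : ↥S → ℝ) : V → ℝ :=
  fun v => if h : v ∈ S then g ⟨v, h⟩ else 0

lemma extFun_mem {S : Set V} (g : ↥S → ℝ) {v : V} (h : v ∈ S) :
    extFun g v = g ⟨v, h⟩ := dif_pos h

lemma extFun_not_mem {S : Set V} (g : ↥S → ℝ) {v : V} (h : v ∉ S) :
    extFun g v = 0 := dif_neg h

lemma extFun_smul {S : Set V} (a : ℝ) (g : ↥S → ℝ) :
    extFun (a • g) = a • extFun g := by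
  funext v
  by_cases h : v ∈ S
  · simp [extFun_mem _ h]
  · simp [extFun_not_mem _ h]

lemma extFun_ne_zero {S : Set V} {g : ↥S → ℝ} (h : g ≠ 0) : extFun g ≠ 0 := by
  intro h0
  refine h (funext fun i => ?_)
  have := congrFun h0 ↑i
  rwa [extFun_mem g i.2] at this

lemma sum_extFun {S : Set V} [Fintype ↥S] (g : ↥S → ℝ) : ∑ v, extFun g v = ∑ i, g i := by
  rw [my_sum_subtype (extFun g) (fun v hv => extFun_not_mem g hv)]
  exact Finset.sum_congr rfl fun i _ => by rw [extFun_mem g i.2]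

lemma dot_extFun {S : Set V} [Fintype ↥S] (g h : ↥S → ℝ) :
    extFun g ⬝ᵥ extFun h = g ⬝ᵥ h := by
  unfold dotProduct
  rw [my_sum_subtype (fun v => extFun g v * extFun h v)
    (fun v hv => by show extFun g v * extFun h v = 0; rw [extFun_not_mem g hv, zero_mul])]
  exact Finset.sum_congr rfl fun i _ => by rw [extFun_mem g i.2, extFun_mem h i.2]

lemma dot_extFun_disjoint {S T : Set V} (hST : ∀ v, v ∈ S → v ∉ T)
    (g : ↥S → ℝ) (h : ↥T → ℝ) : extFun g ⬝ᵥ extFun h = 0 := by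
  unfold dotProduct
  refine Finset.sum_eq_zero fun v _ => ?_
  by_cases hv : v ∈ S
  · rw [extFun_not_mem h (hST v hv), mul_zero]
  · rw [extFun_not_mem g hv, zero_mul]

variable (G : SimpleGraph V)

lemma my_adjMat_induce (c : G.ConnectedComponent) (a b : ↥c.supp) :
    adjMat (SimpleGraph.induce c.supp G) a b = adjMat G ↑a ↑b := by
  simp only [adjMat, Matrix.of_apply, SimpleGraph.comap_adj, Function.Embedding.coe_subtype]

lemma my_adj_mem_supp {c : G.ConnectedComponent} {u v : V} (h : G.Adj u v)
    (hu : u ∈ c.supp) : v ∈ c.supp := by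
  rw [SimpleGraph.ConnectedComponent.mem_supp_iff] at hu ⊢
  rw [← hu]
  exact (SimpleGraph.ConnectedComponent.eq).mpr h.symm.reachable

lemma my_mulVec_ext (c : G.ConnectedComponent) (g : ↥c.supp → ℝ) :
    adjMat G *ᵥ extFun g = extFun (adjMat (SimpleGraph.induce c.supp G) *ᵥ g) := by
  funext u
  by_cases hu : u ∈ c.supp
  · rw [extFun_mem _ hu]
    show ∑ v, adjMat G u v * extFun g v = ∑ i, adjMat (SimpleGraph.induce c.supp G) ⟨u, hu⟩ i * g i
    rw [my_sum_subtype (fun v => adjMat G u v * extFun g v)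
      (fun v hv => by show adjMat G u v * extFun g v = 0; rw [extFun_not_mem g hv, mul_zero])]
    refine Finset.sum_congr rfl fun i _ => ?_
    rw [extFun_mem g i.2, my_adjMat_induce]
  · rw [extFun_not_mem _ hu]
    show ∑ v, adjMat G u v * extFun g v = 0
    refine Finset.sum_eq_zero fun v _ => ?_
    by_cases hv : v ∈ c.supp
    · have : ¬ G.Adj u v := fun h => hu (my_adj_mem_supp G h.symm hv)
      simp [adjMat, this]
    · rw [extFun_not_mem g hv, mul_zero]

lemma my_mulVec_restrict (c : G.ConnectedComponent) (x : V → ℝ) :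
    adjMat (SimpleGraph.induce c.supp G) *ᵥ (fun i => x ↑i)
      = fun i : ↥c.supp => (adjMat G *ᵥ x) ↑i := by
  funext i
  show ∑ j, adjMat (SimpleGraph.induce c.supp G) i j * x ↑j = ∑ v, adjMat G ↑i v * x v
  rw [my_sum_subtype (fun v => adjMat G ↑i v * x v)
    (fun v hv => by
      have : ¬ G.Adj ↑i v := fun h => hv (my_adj_mem_supp G h i.2)
      simp [adjMat, this])]
  exact (Finset.sum_congr rfl fun j _ => by rw [my_adjMat_induce]).symm

lemma my_supp_nonempty (c : G.ConnectedComponent) : Nonempty ↥c.supp := by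
  obtain ⟨v, rfl⟩ := c.exists_rep
  exact ⟨⟨v, (SimpleGraph.ConnectedComponent.mem_supp_iff _ _).mpr rfl⟩⟩

lemma my_supp_disjoint {c c' : G.ConnectedComponent} (h : c ≠ c') (v : V)
    (hv : v ∈ c.supp) : v ∉ c'.supp := by
  rw [SimpleGraph.ConnectedComponent.mem_supp_iff] at hv ⊢
  rw [hv]
  exact h

end GraphAux



section Main
variable {V : Type*} [Fintype V] [DecidableEq V]

lemma extFun_add {S : Set V} (g h : ↥S → ℝ) :
    extFun (g + h) = extFun g + extFun h := by
  funext v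
  by_cases hv : v ∈ S
  · simp [extFun_mem _ hv]
  · simp [extFun_not_mem _ hv]

lemma my_comp_lt (G : SimpleGraph V) (lam : ℝ)
    (hpsd : (lam • (1 : Matrix V V ℝ) - adjMat G
      + (1 / 2 : ℝ) • Matrix.of fun _ _ => (1 : ℝ)).PosSemidef)
    (c₁ : G.ConnectedComponent)
    (h1 : lam < graphEig (SimpleGraph.induce c₁.supp G) 1)
    (c : G.ConnectedComponent) (hne : c ≠ c₁) :
    graphEig (SimpleGraph.induce c.supp G) 1 < lam := by
  by_contra hcon
  push_neg at hcon
  haveI := my_supp_nonempty G c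
  haveI := my_supp_nonempty G c₁
  obtain ⟨f, hf0, hfne, hfeig⟩ := my_exists_nonneg_eigenvector
    (my_adjMat_isHermitian (SimpleGraph.induce c₁.supp G)) (my_adjMat_nonneg _)
  obtain ⟨g, hg0, hgne, hgeig⟩ := my_exists_nonneg_eigenvector
    (my_adjMat_isHermitian (SimpleGraph.induce c.supp G)) (my_adjMat_nonneg _)
  have hlam1 : graphEig (SimpleGraph.induce c₁.supp G) 1
      = eig (adjMat (SimpleGraph.induce c₁.supp G)) 1 := rfl
  have hmu : graphEig (SimpleGraph.induce c.supp G) 1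
      = eig (adjMat (SimpleGraph.induce c.supp G)) 1 := rfl
  set lam1 := eig (adjMat (SimpleGraph.induce c₁.supp G)) 1
  set mu := eig (adjMat (SimpleGraph.induce c.supp G)) 1
  rw [hlam1] at h1
  rw [hmu] at hcon
  have hf : adjMat G *ᵥ extFun f = lam1 • extFun f := by
    rw [my_mulVec_ext, hfeig, extFun_smul]
  have hg : adjMat G *ᵥ extFun g = mu • extFun g := by
    rw [my_mulVec_ext, hgeig, extFun_smul]
  set Sf := ∑ i, f i with hSfdef
  set Sg := ∑ i, g i with hSgdef
  have hSf : 0 < Sf := by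
    refine Finset.sum_pos' (fun i _ => hf0 i) ?_
    obtain ⟨i, hi⟩ := Function.ne_iff.mp hfne
    exact ⟨i, Finset.mem_univ i, lt_of_le_of_ne (hf0 i) (by simpa using (Ne.symm hi))⟩
  have hSg : 0 < Sg := by
    refine Finset.sum_pos' (fun i _ => hg0 i) ?_
    obtain ⟨i, hi⟩ := Function.ne_iff.mp hgne
    exact ⟨i, Finset.mem_univ i, lt_of_le_of_ne (hg0 i) (by simpa using (Ne.symm hi))⟩
  set x := Sg • extFun f - Sf • extFun g with hx
  have hxsum : ∑ v, x v = 0 := by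
    simp only [hx, Pi.sub_apply, Pi.smul_apply, smul_eq_mul]
    rw [Finset.sum_sub_distrib, ← Finset.mul_sum, ← Finset.mul_sum, sum_extFun, sum_extFun,
      ← hSfdef, ← hSgdef]
    ring
  have hJ : (Matrix.of fun _ _ => (1 : ℝ) : Matrix V V ℝ) *ᵥ x = 0 := by
    funext u
    show ∑ v, (Matrix.of fun _ _ => (1:ℝ) : Matrix V V ℝ) u v * x v = 0
    simp only [Matrix.of_apply, one_mul]
    exact hxsum
  have hM : (lam • (1 : Matrix V V ℝ) - adjMat G
        + (1 / 2 : ℝ) • Matrix.of fun _ _ => (1 : ℝ)) *ᵥ x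
      = (Sg * (lam - lam1)) • extFun f - (Sf * (lam - mu)) • extFun g := by
    rw [Matrix.add_mulVec, Matrix.sub_mulVec, Matrix.smul_mulVec, Matrix.one_mulVec,
      Matrix.smul_mulVec, hJ, smul_zero, add_zero]
    have hAx : adjMat G *ᵥ x = Sg • (lam1 • extFun f) - Sf • (mu • extFun g) := by
      rw [hx, Matrix.mulVec_sub, Matrix.mulVec_smul, Matrix.mulVec_smul, hf, hg]
    rw [hAx, hx]
    funext v
    simp only [Pi.sub_apply, Pi.smul_apply, smul_eq_mul]
    ring
  have hFF : 0 < extFun f ⬝ᵥ extFun f := by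
    refine lt_of_le_of_ne (Finset.sum_nonneg fun i _ => mul_self_nonneg _) ?_
    intro h
    exact extFun_ne_zero hfne (dotProduct_self_eq_zero.mp h.symm)
  have hGG : 0 ≤ extFun g ⬝ᵥ extFun g := Finset.sum_nonneg fun i _ => mul_self_nonneg _
  have hfg : extFun f ⬝ᵥ extFun g = 0 :=
    dot_extFun_disjoint (fun v hv => my_supp_disjoint G hne.symm v hv) f g
  have hgf : extFun g ⬝ᵥ extFun f = 0 :=
    dot_extFun_disjoint (fun v hv => my_supp_disjoint G hne v hv) g f
  have hq : x ⬝ᵥ ((lam • (1 : Matrix V V ℝ) - adjMat G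
        + (1 / 2 : ℝ) • Matrix.of fun _ _ => (1 : ℝ)) *ᵥ x)
      = Sg ^ 2 * (lam - lam1) * (extFun f ⬝ᵥ extFun f)
        + Sf ^ 2 * (lam - mu) * (extFun g ⬝ᵥ extFun g) := by
    rw [hM, hx]
    simp only [sub_dotProduct, dotProduct_sub, smul_dotProduct, dotProduct_smul, smul_eq_mul,
      hfg, hgf]
    ring
  have h0 := hpsd.dotProduct_mulVec_nonneg x
  rw [star_trivial, hq] at h0
  have hA : Sg ^ 2 * (lam - lam1) * (extFun f ⬝ᵥ extFun f) < 0 :=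
    mul_neg_of_neg_of_pos
      (mul_neg_of_pos_of_neg (pow_pos hSg 2) (sub_neg.mpr h1)) hFF
  have hB : Sf ^ 2 * (lam - mu) * (extFun g ⬝ᵥ extFun g) ≤ 0 :=
    mul_nonpos_of_nonpos_of_nonneg
      (mul_nonpos_of_nonneg_of_nonpos (sq_nonneg Sf) (sub_nonpos.mpr hcon)) hGG
  linarith

end Main

/-- Suppose `λI - A_G + (1/2)J` is positive semidefinite, `λ` is an
eigenvalue of `A_G`, and some connected component `c₁` realises `λ₁(G₁) = λ₁(G) > λ`.
Then no other component has `λ` as its largest eigenvalue, and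
`dim ker(λI - A_G) = dim ker(λI - A_{G₁})`. -/
theorem kernel_dim_component {V : Type*} [Fintype V] [DecidableEq V]
    (G : SimpleGraph V) (lam : ℝ)
    (hpsd : (lam • (1 : Matrix V V ℝ) - adjMat G
      + (1 / 2 : ℝ) • Matrix.of fun _ _ => (1 : ℝ)).PosSemidef)
    (heig : ∃ f : V → ℝ, f ≠ 0 ∧ (adjMat G).mulVec f = lam • f)
    (c₁ : G.ConnectedComponent)
    (hc₁ : graphEig (SimpleGraph.induce c₁.supp G) 1 = graphEig G 1)
    (hgt : lam < graphEig G 1) :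
    (∀ c : G.ConnectedComponent, c ≠ c₁ →
        graphEig (SimpleGraph.induce c.supp G) 1 ≠ lam) ∧
      eigMult (adjMat G) lam = eigMult (adjMat (SimpleGraph.induce c₁.supp G)) lam := by
  have h1 : lam < graphEig (SimpleGraph.induce c₁.supp G) 1 := by rw [hc₁]; exact hgt
  have hlt : ∀ c : G.ConnectedComponent, c ≠ c₁ →
      graphEig (SimpleGraph.induce c.supp G) 1 < lam :=
    fun c hne => my_comp_lt G lam hpsd c₁ h1 c hne
  refine ⟨fun c hne => ne_of_lt (hlt c hne), ?_⟩
  -- kernel dimension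
  set T : (V → ℝ) →ₗ[ℝ] (V → ℝ) := (adjMat G).mulVecLin - lam • LinearMap.id with hT
  set T₁ : (↥c₁.supp → ℝ) →ₗ[ℝ] (↥c₁.supp → ℝ) :=
    (adjMat (SimpleGraph.induce c₁.supp G)).mulVecLin - lam • LinearMap.id with hT₁
  have hmemT : ∀ x : V → ℝ, x ∈ LinearMap.ker T ↔ adjMat G *ᵥ x = lam • x := fun x => by
    rw [LinearMap.mem_ker, hT, LinearMap.sub_apply, LinearMap.smul_apply, LinearMap.id_apply,
      Matrix.mulVecLin_apply, sub_eq_zero]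
  have hmemT₁ : ∀ g : ↥c₁.supp → ℝ, g ∈ LinearMap.ker T₁ ↔
      adjMat (SimpleGraph.induce c₁.supp G) *ᵥ g = lam • g := fun gg => by
    rw [LinearMap.mem_ker, hT₁, LinearMap.sub_apply, LinearMap.smul_apply, LinearMap.id_apply,
      Matrix.mulVecLin_apply, sub_eq_zero]
  have hvanish : ∀ x : V → ℝ, adjMat G *ᵥ x = lam • x → ∀ v : V, v ∉ c₁.supp → x v = 0 := by
    intro x hx v hv
    set c := G.connectedComponentMk v with hc
    have hmemv : v ∈ c.supp := by
      rw [SimpleGraph.ConnectedComponent.mem_supp_iff]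
    have hcne : c ≠ c₁ := fun h => hv (h ▸ hmemv)
    by_contra hxv
    have hr : adjMat (SimpleGraph.induce c.supp G) *ᵥ (fun i : ↥c.supp => x ↑i)
        = lam • (fun i : ↥c.supp => x ↑i) := by
      rw [my_mulVec_restrict, hx]
      rfl
    have hne0 : (fun i : ↥c.supp => x ↑i) ≠ 0 := fun h => hxv (congrFun h ⟨v, hmemv⟩)
    haveI := my_supp_nonempty G c
    have hle := my_eigenvalue_le hne0 hr
    exact absurd hle (not_le.mpr (hlt c hcne))
  -- the extension linear map
  set E : (↥c₁.supp → ℝ) →ₗ[ℝ] (V → ℝ) :=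
    { toFun := extFun
      map_add' := extFun_add
      map_smul' := fun a gg => extFun_smul a gg } with hE
  have hEker : ∀ gg : LinearMap.ker T₁, E gg.1 ∈ LinearMap.ker T := by
    rintro ⟨gg, hgg⟩
    rw [hmemT]
    show adjMat G *ᵥ extFun gg = lam • extFun gg
    rw [my_mulVec_ext, (hmemT₁ gg).mp hgg, extFun_smul]
  set Φ : LinearMap.ker T₁ →ₗ[ℝ] LinearMap.ker T :=
    LinearMap.codRestrict (LinearMap.ker T) (E.comp (Submodule.subtype _)) hEker with hΦ
  have hinj : Function.Injective Φ := by
    intro a b hab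
    have h2 : extFun a.1 = extFun b.1 := congrArg Subtype.val hab
    refine Subtype.ext (funext fun i => ?_)
    have := congrFun h2 ↑i
    rwa [extFun_mem _ i.2, extFun_mem _ i.2] at this
  have hsurj : Function.Surjective Φ := by
    rintro ⟨x, hxk⟩
    have hx := (hmemT x).mp hxk
    set gg : ↥c₁.supp → ℝ := fun i => x ↑i with hgg
    have hggker : gg ∈ LinearMap.ker T₁ := by
      rw [hmemT₁, hgg, my_mulVec_restrict, hx]
      rfl
    refine ⟨⟨gg, hggker⟩, Subtype.ext ?_⟩
    show extFun gg = x
    funext v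
    by_cases hv : v ∈ c₁.supp
    · rw [extFun_mem _ hv]
    · rw [extFun_not_mem _ hv]
      exact (hvanish x hx v hv).symm
  have := LinearEquiv.finrank_eq (LinearEquiv.ofBijective Φ ⟨hinj, hsurj⟩)
  exact this.symm
end
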